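/- For every 312-avoiding permutation π of length n, foze''(π) = Σ_{i ∈ Lmax(π)} (π_i - i), where foze''(π) is the number of occurrences of the vincular pattern [23]-1 plus the number of descents of π. -/

import Mathlib

/-!
For a left-to-right maximum `i` every smaller value sits to the right of `i`, so the right-hand
side counts the pairs `i < j` with `π j < π i` and `i` a left-to-right maximum. Split such a pair
according to the value before `i`. If `π (i - 1) > π j`, then `(i - 1, i, j)` is a `[23]1`
occurrence, and conversely, since in a 312-avoider every ascent top is a left-to-right maximum.
Otherwise `i` is the first position whose value exceeds `π j`; since 312-avoidance forces every
position between `i` and `j` to stay above `π j`, the pair `(i, j)` is recovered from the descent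
at `j - 1`, and every descent arises this way.
-/

open scoped Classical

namespace ThesisStmt
noncomputable section

variable {n : ℕ}

/-- π avoids the classical pattern 231: no i<j<k with π k < π i < π j. -/
def Avoids231 (π : Equiv.Perm (Fin n)) : Prop :=
  ¬ ∃ i j k : Fin n, i < j ∧ j < k ∧ π k < π i ∧ π i < π j

/-- π avoids 312: no i<j<k with π j < π k < π i. -/
def Avoids312 (π : Equiv.Perm (Fin n)) : Prop :=
  ¬ ∃ i j k : Fin n, i < j ∧ j < k ∧ π j < π k ∧ π k < π i

/-- π avoids 321: no i<j<k with π k < π j < π i. -/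
def Avoids321 (π : Equiv.Perm (Fin n)) : Prop :=
  ¬ ∃ i j k : Fin n, i < j ∧ j < k ∧ π k < π j ∧ π j < π i

/-- A nonempty set of positions whose values, read in increasing position order,
form consecutive integers decreasing by 1 (values strictly decrease along positions
and the value set is an integer interval). -/
def IsDecSeq (π : Equiv.Perm (Fin n)) (I : Finset (Fin n)) : Prop :=
  I.Nonempty ∧ (∀ i ∈ I, ∀ j ∈ I, i < j → π j < π i) ∧
    ∀ v : Fin n, (∃ a ∈ I, π a ≤ v) → (∃ b ∈ I, v ≤ π b) → ∃ c ∈ I, π c = v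

/-- An inverse descent run: a maximal `IsDecSeq`. -/
def IsIDR (π : Equiv.Perm (Fin n)) (I : Finset (Fin n)) : Prop :=
  IsDecSeq π I ∧ ∀ J : Finset (Fin n), IsDecSeq π J → I ⊆ J → J = I

/-- `I 0, I 1, ..., I (k-1)` is the family of inverse descent runs of π,
partitioning the positions, ordered by decreasing maximum value. -/
def IDRFamily (π : Equiv.Perm (Fin n)) {k : ℕ} (I : Fin k → Finset (Fin n)) : Prop :=
  (∀ j, IsIDR π (I j)) ∧ (∀ x : Fin n, ∃! j, x ∈ I j) ∧
    ∀ u v : Fin k, u < v → ∃ a ∈ I u, ∀ b ∈ I v, π b < π a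

/-- position i is a left-to-right maximum. -/
def IsLmax (π : Equiv.Perm (Fin n)) (i : Fin n) : Prop := ∀ j, j < i → π j < π i

/-- position i is a right-to-left maximum. -/
def IsRmax (π : Equiv.Perm (Fin n)) (i : Fin n) : Prop := ∀ j, i < j → π j < π i

/-- position i is a right-to-left minimum. -/
def IsRmin (π : Equiv.Perm (Fin n)) (i : Fin n) : Prop := ∀ j, i < j → π i < π j

def LmaxSet (π : Equiv.Perm (Fin n)) : Finset (Fin n) := Finset.univ.filter (IsLmax π)

def rmaxCount (π : Equiv.Perm (Fin n)) : ℕ := (Finset.univ.filter (IsRmax π)).card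

def rminCount (π : Equiv.Perm (Fin n)) : ℕ := (Finset.univ.filter (IsRmin π)).card

/-- number of inversions (i, j) with first coordinate i. -/
def invAt (π : Equiv.Perm (Fin n)) (i : Fin n) : ℕ :=
  (Finset.univ.filter (fun j : Fin n => i < j ∧ π j < π i)).card

/-- total number of inversions. -/
def inv (π : Equiv.Perm (Fin n)) : ℕ :=
  (Finset.univ.filter (fun p : Fin n × Fin n => p.1 < p.2 ∧ π p.2 < π p.1)).card

def IsAscent (π : Equiv.Perm (Fin n)) (i : Fin n) : Prop :=
  ∃ h : (i : ℕ) + 1 < n, π i < π ⟨(i : ℕ) + 1, h⟩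

def IsDescent (π : Equiv.Perm (Fin n)) (i : Fin n) : Prop :=
  ∃ h : (i : ℕ) + 1 < n, π ⟨(i : ℕ) + 1, h⟩ < π i

/-- number of descents, which is also the number of occurrences of [21]. -/
def des (π : Equiv.Perm (Fin n)) : ℕ := (Finset.univ.filter (IsDescent π)).card

/-- occurrences of the vincular pattern 2-[13]: (x, y, y+1), x < y, π y < π x < π (y+1). -/
def occ2_13 (π : Equiv.Perm (Fin n)) : ℕ :=
  (Finset.univ.filter (fun p : Fin n × Fin n =>
    ∃ h : (p.2 : ℕ) + 1 < n, p.1 < p.2 ∧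
      π p.2 < π p.1 ∧ π p.1 < π ⟨(p.2 : ℕ) + 1, h⟩)).card

/-- occurrences of [23]-1: (x, x+1, y), x+1 < y, π y < π x < π (x+1). -/
def occ23_1 (π : Equiv.Perm (Fin n)) : ℕ :=
  (Finset.univ.filter (fun p : Fin n × Fin n =>
    ∃ h : (p.1 : ℕ) + 1 < n, (⟨(p.1 : ℕ) + 1, h⟩ : Fin n) < p.2 ∧
      π p.2 < π p.1 ∧ π p.1 < π ⟨(p.1 : ℕ) + 1, h⟩)).card

/-- occurrences of [13]-2: (x, x+1, y), x+1 < y, π x < π y < π (x+1). -/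
def occ13_2 (π : Equiv.Perm (Fin n)) : ℕ :=
  (Finset.univ.filter (fun p : Fin n × Fin n =>
    ∃ h : (p.1 : ℕ) + 1 < n, (⟨(p.1 : ℕ) + 1, h⟩ : Fin n) < p.2 ∧
      π p.1 < π p.2 ∧ π p.2 < π ⟨(p.1 : ℕ) + 1, h⟩)).card

/-- occurrences of [21]-3: (x, x+1, y), x+1 < y, π (x+1) < π x < π y. -/
def occ21_3 (π : Equiv.Perm (Fin n)) : ℕ :=
  (Finset.univ.filter (fun p : Fin n × Fin n =>
    ∃ h : (p.1 : ℕ) + 1 < n, (⟨(p.1 : ℕ) + 1, h⟩ : Fin n) < p.2 ∧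
      π ⟨(p.1 : ℕ) + 1, h⟩ < π p.1 ∧ π p.1 < π p.2)).card

/-- occurrences of [32]-1: (x, x+1, y), x+1 < y, π y < π (x+1) < π x. -/
def occ32_1 (π : Equiv.Perm (Fin n)) : ℕ :=
  (Finset.univ.filter (fun p : Fin n × Fin n =>
    ∃ h : (p.1 : ℕ) + 1 < n, (⟨(p.1 : ℕ) + 1, h⟩ : Fin n) < p.2 ∧
      π p.2 < π ⟨(p.1 : ℕ) + 1, h⟩ ∧ π ⟨(p.1 : ℕ) + 1, h⟩ < π p.1)).card

/-- occurrences of [31]-2: (x, x+1, y), x+1 < y, π (x+1) < π y < π x. -/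
def occ31_2 (π : Equiv.Perm (Fin n)) : ℕ :=
  (Finset.univ.filter (fun p : Fin n × Fin n =>
    ∃ h : (p.1 : ℕ) + 1 < n, (⟨(p.1 : ℕ) + 1, h⟩ : Fin n) < p.2 ∧
      π ⟨(p.1 : ℕ) + 1, h⟩ < π p.2 ∧ π p.2 < π p.1)).card

/-- occurrences of 3-[21]: (y, x, x+1), y < x, π (x+1) < π x < π y. -/
def occ3_21 (π : Equiv.Perm (Fin n)) : ℕ :=
  (Finset.univ.filter (fun p : Fin n × Fin n =>
    ∃ h : (p.2 : ℕ) + 1 < n, p.1 < p.2 ∧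
      π ⟨(p.2 : ℕ) + 1, h⟩ < π p.2 ∧ π p.2 < π p.1)).card

/-- bast = [13]2 + [21]3 + [32]1 + [21]. -/
def bast (π : Equiv.Perm (Fin n)) : ℕ := occ13_2 π + occ21_3 π + occ32_1 π + des π

/-- foze = [21]3 + 3[21] + [13]2 + [21]. -/
def foze (π : Equiv.Perm (Fin n)) : ℕ := occ21_3 π + occ3_21 π + occ13_2 π + des π

/-- foze'' = [23]1 + [31]2 + [31]2 + [21]. -/
def fozePP (π : Equiv.Perm (Fin n)) : ℕ := occ23_1 π + occ31_2 π + occ31_2 π + des π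

open Finset

theorem exists_add_one_lt_iff_exists_covBy {x : Fin n} {P : Fin n → Prop} :
    (∃ h : (x : ℕ) + 1 < n, P ⟨x + 1, h⟩) ↔ ∃ i, x ⋖ i ∧ P i := by
  simp only [Fin.covBy_iff, Nat.covBy_iff_add_one_eq]
  constructor
  · rintro ⟨h, hP⟩
    exact ⟨_, rfl, hP⟩
  · rintro ⟨⟨i, hi⟩, rfl, hP⟩
    exact ⟨hi, hP⟩

theorem des_eq_card_covBy (π : Equiv.Perm (Fin n)) :
    des π = #{x | ∃ j, x ⋖ j ∧ π j < π x} :=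
  congrArg card (filter_congr fun x _ =>
    exists_add_one_lt_iff_exists_covBy (P := fun j => π j < π x))

theorem occ23_1_eq_card_covBy (π : Equiv.Perm (Fin n)) :
    occ23_1 π = #{p : Fin n × Fin n | ∃ i, p.1 ⋖ i ∧ i < p.2 ∧ π p.2 < π p.1 ∧ π p.1 < π i} :=
  congrArg card (filter_congr fun p _ =>
    exists_add_one_lt_iff_exists_covBy (P := fun i => i < p.2 ∧ π p.2 < π p.1 ∧ π p.1 < π i))

theorem card_apply_lt_apply (π : Equiv.Perm (Fin n)) (i : Fin n) :
    #{j | π j < π i} = π i := by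
  rw [← Fin.card_Iio, ← card_map π.toEmbedding]
  congr 1
  ext v
  simp

theorem invAt_of_isLmax {π : Equiv.Perm (Fin n)} {i : Fin n} (hi : IsLmax π i) :
    invAt π i = π i - i := by
  have hbefore : ({j ∈ {j | π j < π i} | j < i} : Finset (Fin n)) = Iio i := by
    ext j
    simpa using hi j
  have hafter : ({j ∈ {j | π j < π i} | ¬j < i} : Finset (Fin n)) =
      ({j | i < j ∧ π j < π i} : Finset (Fin n)) := by
    ext j
    simp only [mem_filter, mem_univ, true_and, not_lt]
    grind
  have hsplit := card_filter_add_card_filter_not (s := {j | π j < π i}) (fun j => j < i)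
  rw [hbefore, hafter, Fin.card_Iio, card_apply_lt_apply] at hsplit
  rw [invAt]
  omega

def lmaxInversions (π : Equiv.Perm (Fin n)) : Finset (Fin n × Fin n) :=
  {p ∈ LmaxSet π ×ˢ univ | p.1 < p.2 ∧ π p.2 < π p.1}

theorem sum_lmaxSet_eq_card_lmaxInversions (π : Equiv.Perm (Fin n)) :
    ∑ i ∈ LmaxSet π, ((π i : ℕ) - i) = #(lmaxInversions π) := by
  rw [lmaxInversions, card_filter, sum_product]
  refine sum_congr rfl fun i hi => ?_
  rw [← invAt_of_isLmax (mem_filter.1 hi).2, invAt, card_filter]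

theorem Avoids312.lt_apply_of_lt_of_lt {π : Equiv.Perm (Fin n)} (h : Avoids312 π) {i k j : Fin n}
    (hik : i < k) (hkj : k < j) (hji : π j < π i) : π j < π k := by
  refine lt_of_le_of_ne (not_lt.1 fun hkj' => h ⟨i, k, j, hik, hkj, hkj', hji⟩) ?_
  exact fun e => hkj.ne (π.injective e).symm

theorem Avoids312.isLmax_of_covBy {π : Equiv.Perm (Fin n)} (h : Avoids312 π) {x i : Fin n}
    (hxi : x ⋖ i) (hlt : π x < π i) : IsLmax π i := by
  intro k hk
  rcases (hxi.le_of_lt hk).eq_or_lt with rfl | hkx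
  · exact hlt
  · refine lt_of_le_of_ne (not_lt.1 fun hik => ?_) fun e => hk.ne (π.injective e)
    exact (h.lt_apply_of_lt_of_lt hkx hxi.lt hik).asymm hlt

theorem Avoids312.apply_le_of_lt_of_apply_covBy_le {π : Equiv.Perm (Fin n)} (h : Avoids312 π)
    {i j : Fin n} (hij : i < j) (hpred : ∀ x, x ⋖ i → π x ≤ π j) {k : Fin n} (hki : k < i) :
    π k ≤ π j := by
  have hx := Order.pred_covBy_of_not_isMin (not_isMin_of_lt hki)
  refine not_lt.1 fun hjk => (hpred _ hx).not_gt ?_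
  rcases (hx.le_of_lt hki).eq_or_lt with rfl | hkx
  · exact hjk
  · exact h.lt_apply_of_lt_of_lt hkx (hx.lt.trans hij) hjk

@[simp]
theorem mem_lmaxInversions {π : Equiv.Perm (Fin n)} {p : Fin n × Fin n} :
    p ∈ lmaxInversions π ↔ IsLmax π p.1 ∧ p.1 < p.2 ∧ π p.2 < π p.1 := by
  simp [lmaxInversions, LmaxSet]

theorem card_lmaxInversions_filter_covBy {π : Equiv.Perm (Fin n)} (h : Avoids312 π) :
    #{p ∈ lmaxInversions π | ∃ x, x ⋖ p.1 ∧ π p.2 < π x} = occ23_1 π := by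
  rw [occ23_1_eq_card_covBy]
  refine card_nbij (fun p => (Order.pred p.1, p.2)) ?_ ?_ ?_
  · rintro ⟨i, j⟩ hp
    simp only [mem_coe, mem_filter, mem_univ, true_and, mem_lmaxInversions] at hp ⊢
    obtain ⟨⟨hi, hij, -⟩, x, hxi, hjx⟩ := hp
    rw [hxi.pred_eq]
    exact ⟨i, hxi, hij, hjx, hi x hxi.lt⟩
  · rintro ⟨i, j⟩ hp ⟨i', j'⟩ hp' e
    simp only [mem_coe, mem_filter, mem_lmaxInversions, Prod.mk.injEq] at hp hp' e ⊢
    obtain ⟨-, x, hxi, -⟩ := hp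
    obtain ⟨-, x', hxi', -⟩ := hp'
    rw [hxi.pred_eq, hxi'.pred_eq] at e
    exact ⟨hxi.unique_right (e.1 ▸ hxi'), e.2⟩
  · rintro ⟨x, y⟩ hq
    simp only [mem_coe, mem_filter, mem_univ, true_and] at hq
    obtain ⟨i, hxi, hiy, hyx, hxi'⟩ := hq
    refine ⟨(i, y), ?_, by simp [hxi.pred_eq]⟩
    simp only [mem_coe, mem_filter, mem_lmaxInversions]
    exact ⟨⟨h.isLmax_of_covBy hxi hxi', hiy, hyx.trans hxi'⟩, x, hxi, hyx⟩

theorem card_lmaxInversions_filter_not_covBy {π : Equiv.Perm (Fin n)} (h : Avoids312 π) :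
    #{p ∈ lmaxInversions π | ¬∃ x, x ⋖ p.1 ∧ π p.2 < π x} = des π := by
  rw [des_eq_card_covBy]
  refine card_nbij (fun p => Order.pred p.2) ?_ ?_ ?_
  · rintro ⟨i, j⟩ hp
    simp only [mem_coe, mem_filter, mem_univ, true_and, mem_lmaxInversions] at hp ⊢
    obtain ⟨⟨-, hij, hji⟩, -⟩ := hp
    have hj := Order.pred_covBy_of_not_isMin (not_isMin_of_lt hij)
    refine ⟨j, hj, ?_⟩
    rcases (hj.le_of_lt hij).eq_or_lt with e | hlt
    · rwa [← e]
    · exact h.lt_apply_of_lt_of_lt hlt hj.lt hji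
  · rintro ⟨i, j⟩ hp ⟨i', j'⟩ hp' e
    simp only [mem_coe, mem_filter, mem_lmaxInversions, not_exists, not_and, not_lt]
      at hp hp' e
    obtain ⟨⟨-, hij, hji⟩, hpred⟩ := hp
    obtain ⟨⟨-, hij', hji'⟩, hpred'⟩ := hp'
    obtain rfl : j = j' := (Order.pred_covBy_of_not_isMin (not_isMin_of_lt hij)).unique_right
      (e ▸ Order.pred_covBy_of_not_isMin (not_isMin_of_lt hij'))
    refine Prod.ext (le_antisymm (not_lt.1 fun hi => ?_) (not_lt.1 fun hi => ?_)) rfl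
    · exact (h.apply_le_of_lt_of_apply_covBy_le hij hpred hi).not_gt hji'
    · exact (h.apply_le_of_lt_of_apply_covBy_le hij' hpred' hi).not_gt hji
  · intro x hx
    simp only [mem_coe, mem_filter, mem_univ, true_and] at hx
    obtain ⟨j, hxj, hjx⟩ := hx
    obtain ⟨i, hi, hfirst⟩ := exists_min_image {k | π j < π k} id ⟨x, by simpa using hjx⟩
    simp only [mem_filter, mem_univ, true_and, id] at hi hfirst
    have hbefore : ∀ k < i, π k ≤ π j := fun k hk => not_lt.1 fun hjk => (hfirst k hjk).not_gt hk
    refine ⟨(i, j), ?_, hxj.pred_eq⟩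
    simp only [mem_coe, mem_filter, mem_lmaxInversions, not_exists, not_and, not_lt]
    exact ⟨⟨fun k hk => (hbefore k hk).trans_lt hi, (hfirst x hjx).trans_lt hxj.lt, hi⟩,
      fun y hy => hbefore y hy.lt⟩

/-- for 312-avoiding π, foze''(π) (= number of [23]1-occurrences plus
number of descents) equals Σ_{i ∈ Lmax(π)} (π_i - i). -/
theorem stmt10 {n : ℕ} (π : Equiv.Perm (Fin n)) (h : Avoids312 π) :
    occ23_1 π + des π = ∑ i ∈ LmaxSet π, ((π i : ℕ) - (i : ℕ)) := by
  rw [sum_lmaxSet_eq_card_lmaxInversions,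
    ← card_filter_add_card_filter_not fun p : Fin n × Fin n => ∃ x, x ⋖ p.1 ∧ π p.2 < π x,
    card_lmaxInversions_filter_covBy h, card_lmaxInversions_filter_not_covBy h]

end
end ThesisStmt
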